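/- Let L be the finitary first-order language with one binary function symbol ·. A nonempty L-structure (A, ·) admits an L-embedding (an injective map preserving ·) into a quasigroup (a nonempty structure (B, ·) such that for all a, b ∈ B there is a unique x ∈ B with a·x = b and a unique y ∈ B with y·a = b) iff · on A satisfies both cancellation laws: for all a, b, c ∈ A, a·b = a·c implies b = c, and b·a = c·a implies b = c. -/

import Mathlib

/-!
Record a partial multiplication by its graph, the set of triples `![x, y, x * y]`. The
quasigroup laws say exactly that any two entries of a triple determine the third (a Latin
square), and cancellativity of `A` says that the multiplication table of `A` is a partial
Latin square. Starting from that table, repeatedly complete every pair of entries that has no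
completing triple by a brand-new element, cycling through the three coordinates. New elements
cannot clash with old triples, so every stage stays partial Latin, and the union of all stages
is a Latin square in which every pair of entries is completed: the graph of a quasigroup
containing `A`.
-/

open Function Set

universe u

section PartialLatin

variable {X : Type*}

lemma Fin.eq_or_eq_add_one_or_eq_add_two (i j : Fin 3) : j = i ∨ j = i + 1 ∨ j = i + 2 := by
  fin_cases i <;> fin_cases j <;> decide

lemma eqOn_compl_singleton_fin_three {s t : Fin 3 → X} {i : Fin 3} :
    EqOn s t {i}ᶜ ↔ s (i + 1) = t (i + 1) ∧ s (i + 2) = t (i + 2) := by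
  refine ⟨fun h => ⟨h ?_, h ?_⟩, fun ⟨h₁, h₂⟩ j hj => ?_⟩
  · exact add_ne_left.2 (by decide)
  · exact add_ne_left.2 (by decide)
  · rcases Fin.eq_or_eq_add_one_or_eq_add_two i j with rfl | rfl | rfl
    exacts [absurd rfl hj, h₁, h₂]

def IsPartialLatin (T : Set (Fin 3 → X)) : Prop :=
  ∀ s ∈ T, ∀ t ∈ T, ∀ i, EqOn s t {i}ᶜ → s = t

theorem IsPartialLatin.iUnion {T : ℕ → Set (Fin 3 → X)} (hmono : Monotone T)
    (hT : ∀ m, IsPartialLatin (T m)) : IsPartialLatin (⋃ m, T m) := by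
  simp only [IsPartialLatin, mem_iUnion]
  rintro s ⟨m, hs⟩ t ⟨n, ht⟩
  exact hT (max m n) s (hmono (le_max_left m n) hs) t (hmono (le_max_right m n) ht)

theorem IsPartialLatin.exists_quasigroup {T : Set (Fin 3 → X)} (hT : IsPartialLatin T)
    (hcomplete : ∀ i u, ∃ t ∈ T, EqOn t u {i}ᶜ) :
    ∃ op : X → X → X, (∀ a b, ∃! x, op a x = b) ∧ (∀ a b, ∃! y, op y a = b) ∧
      ∀ x y z, ![x, y, z] ∈ T → op x y = z := by
  have hupdate : ∀ i u, ∃ w, update u i w ∈ T := fun i u => by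
    obtain ⟨t, ht, htu⟩ := hcomplete i u
    exact ⟨t i, eq_update_iff.2 ⟨rfl, htu⟩ ▸ ht⟩
  have prod : ∀ x y, ∃ z, ![x, y, z] ∈ T := fun x y =>
    (hupdate 2 ![x, y, x]).imp fun z hz => by convert hz using 1; ext j; fin_cases j <;> rfl
  have rdiv : ∀ x z, ∃ y, ![x, y, z] ∈ T := fun x z =>
    (hupdate 1 ![x, x, z]).imp fun y hy => by convert hy using 1; ext j; fin_cases j <;> rfl
  have ldiv : ∀ y z, ∃ x, ![x, y, z] ∈ T := fun y z =>
    (hupdate 0 ![y, y, z]).imp fun x hx => by convert hx using 1; ext j; fin_cases j <;> rfl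
  have eq₂ : ∀ {x y z z'}, ![x, y, z] ∈ T → ![x, y, z'] ∈ T → z = z' := fun hs ht =>
    congrFun (hT _ hs _ ht 2 (by simp [eqOn_compl_singleton_fin_three])) 2
  have eq₁ : ∀ {x y y' z}, ![x, y, z] ∈ T → ![x, y', z] ∈ T → y = y' := fun hs ht =>
    congrFun (hT _ hs _ ht 1 (by simp [eqOn_compl_singleton_fin_three])) 1
  have eq₀ : ∀ {x x' y z}, ![x, y, z] ∈ T → ![x', y, z] ∈ T → x = x' := fun hs ht =>
    congrFun (hT _ hs _ ht 0 (by simp [eqOn_compl_singleton_fin_three])) 0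
  choose op hop using prod
  refine ⟨op, fun a b => ?_, fun a b => ?_, fun x y z h => eq₂ (hop x y) h⟩
  · obtain ⟨y, hy⟩ := rdiv a b
    exact ⟨y, eq₂ (hop a y) hy, fun y' hy' => eq₁ (hy' ▸ hop a y') hy⟩
  · obtain ⟨x, hx⟩ := ldiv a b
    exact ⟨x, eq₂ (hop x a) hx, fun x' hx' => eq₀ (hx' ▸ hop x' a) hx⟩

def fillFresh (T : Set (Fin 3 → X)) (i : Fin 3) (D : Set X) (g : X → X → X) : Set (Fin 3 → X) :=
  T ∪ {t | t (i + 1) ∈ D ∧ t (i + 2) ∈ D ∧ t i = g (t (i + 1)) (t (i + 2)) ∧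
    ∀ s ∈ T, ¬ EqOn s t {i}ᶜ}

variable {T : Set (Fin 3 → X)} {i : Fin 3} {D : Set X} {g : X → X → X}

theorem IsPartialLatin.fillFresh (hT : IsPartialLatin T) (hg : Injective2 g)
    (hfresh : ∀ s ∈ T, ∀ a b, s i ≠ g a b) : IsPartialLatin (fillFresh T i D g) := by
  have old_new : ∀ s ∈ T, ∀ t, t i = g (t (i + 1)) (t (i + 2)) →
      (∀ s ∈ T, ¬ EqOn s t {i}ᶜ) → ∀ j, ¬ EqOn s t {j}ᶜ := by
    intro s hs t ht hnew j hst
    by_cases hj : i = j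
    · exact hnew s hs (hj ▸ hst)
    · exact hfresh s hs _ _ ((hst hj).trans ht)
  rintro s (hs | ⟨-, -, hs, hs'⟩) t (ht | ⟨-, -, ht, ht'⟩) j hst
  · exact hT s hs t ht j hst
  · exact (old_new s hs t ht ht' j hst).elim
  · exact (old_new t ht s hs hs' j hst.symm).elim
  have hoff : EqOn s t {i}ᶜ := by
    by_cases hj : i = j
    · exact hj ▸ hst
    · exact eqOn_compl_singleton_fin_three.2 (hg (hs.symm.trans ((hst hj).trans ht)))
  obtain ⟨h₁, h₂⟩ := eqOn_compl_singleton_fin_three.1 hoff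
  refine (eq_update_iff.2 ⟨?_, hoff⟩).trans (update_eq_self i t)
  rw [hs, ht, h₁, h₂]

theorem exists_mem_fillFresh_eqOn (u : Fin 3 → X) (h₁ : u (i + 1) ∈ D) (h₂ : u (i + 2) ∈ D) :
    ∃ t ∈ fillFresh T i D g, EqOn t u {i}ᶜ := by
  by_cases hu : ∃ s ∈ T, EqOn s u {i}ᶜ
  · obtain ⟨s, hs, hsu⟩ := hu
    exact ⟨s, Or.inl hs, hsu⟩
  push Not at hu
  have hne₁ : i + 1 ≠ i := add_ne_left.2 (by decide)
  have hne₂ : i + 2 ≠ i := add_ne_left.2 (by decide)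
  set t := update u i (g (u (i + 1)) (u (i + 2)))
  have htu : EqOn t u {i}ᶜ := fun j hj => update_of_ne hj _ _
  refine ⟨t, Or.inr ⟨?_, ?_, ?_, fun s hs hst => hu s hs (hst.trans htu)⟩, htu⟩
  · rwa [htu hne₁]
  · rwa [htu hne₂]
  · rw [htu hne₁, htu hne₂]
    exact update_self ..

end PartialLatin

/-- `new m x y` is the element adjoined at step `m` of the construction to complete the pair
`x, y`; its `stage` is `m + 1`, so it is fresh for the first `m` steps. -/
inductive Word (A : Type u) : Type u
  | of : A → Word A
  | new : ℕ → Word A → Word A → Word A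

namespace Word

open scoped Fin.NatCast

variable {A : Type u}

def stage : Word A → ℕ
  | of _ => 0
  | new m _ _ => m + 1

lemma injective2_new (m : ℕ) : Injective2 (new (A := A) m) := fun _ _ _ _ h => by
  injection h with _ h₁ h₂
  exact ⟨h₁, h₂⟩

variable [Mul A]

def table : Set (Fin 3 → Word A) :=
  range fun p : A × A => ![of p.1, of p.2, of (p.1 * p.2)]

lemma isPartialLatin_table [IsCancelMul A] : IsPartialLatin (table (A := A)) := by
  rintro _ ⟨⟨a, b⟩, rfl⟩ _ ⟨⟨c, d⟩, rfl⟩ i h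
  rw [eqOn_compl_singleton_fin_three] at h
  fin_cases i <;>
    simp only [Fin.zero_eta, Fin.mk_one, Fin.reduceFinMk, Fin.isValue, Fin.reduceAdd, zero_add,
      Matrix.cons_val_zero, Matrix.cons_val_one, Matrix.cons_val, Matrix.vecCons_inj, of.injEq,
      and_true] at h ⊢
  · obtain ⟨rfl, h⟩ := h
    exact ⟨mul_right_cancel h, rfl, h⟩
  · obtain ⟨h, rfl⟩ := h
    exact ⟨rfl, mul_left_cancel h, h⟩
  · obtain ⟨rfl, rfl⟩ := h
    exact ⟨rfl, rfl, rfl⟩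

def chain : ℕ → Set (Fin 3 → Word A)
  | 0 => table
  | m + 1 => fillFresh (chain m) (m : Fin 3) {x | x.stage ≤ m} (new m)

lemma stage_le_of_mem_chain {m : ℕ} {t : Fin 3 → Word A} (ht : t ∈ chain m) (k : Fin 3) :
    (t k).stage ≤ m := by
  induction m generalizing t with
  | zero =>
    obtain ⟨⟨a, b⟩, rfl⟩ := ht
    fin_cases k <;> rfl
  | succ m ih =>
    rcases ht with ht | ⟨h₁, h₂, hi, -⟩
    · exact (ih ht).trans m.le_succ
    rcases Fin.eq_or_eq_add_one_or_eq_add_two (m : Fin 3) k with rfl | rfl | rfl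
    · rw [hi]; rfl
    · exact h₁.trans m.le_succ
    · exact h₂.trans m.le_succ

lemma isPartialLatin_chain [IsCancelMul A] (m : ℕ) : IsPartialLatin (chain (A := A) m) := by
  induction m with
  | zero => exact isPartialLatin_table
  | succ m ih =>
    refine ih.fillFresh (injective2_new m) fun s hs a b h => ?_
    have := stage_le_of_mem_chain hs (m : Fin 3)
    rw [h] at this
    exact m.not_succ_le_self this

lemma monotone_chain : Monotone (chain (A := A)) :=
  monotone_nat_of_le_succ fun _ => subset_union_left

def limit : Set (Fin 3 → Word A) := ⋃ m, chain m

lemma isPartialLatin_limit [IsCancelMul A] : IsPartialLatin (limit (A := A)) :=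
  .iUnion monotone_chain isPartialLatin_chain

lemma exists_mem_limit_eqOn (i : Fin 3) (u : Fin 3 → Word A) :
    ∃ t ∈ limit, EqOn t u {i}ᶜ := by
  set m := 3 * ((u (i + 1)).stage + (u (i + 2)).stage) + i.val
  have hm : (m : Fin 3) = i := Fin.ext (by simp only [Fin.val_natCast, m]; omega)
  obtain ⟨t, ht, htu⟩ : ∃ t ∈ chain (m + 1), EqOn t u {(m : Fin 3)}ᶜ :=
    exists_mem_fillFresh_eqOn u (by rw [hm, mem_ofPred_eq]; omega) (by rw [hm, mem_ofPred_eq]; omega)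
  exact ⟨t, mem_iUnion.2 ⟨m + 1, ht⟩, hm ▸ htu⟩

end Word

theorem embeds_into_quasigroup_iff_cancellative
    {A : Type u} [Mul A] [Nonempty A] :
    (∃ (B : Type u) (op : B → B → B) (_ : Nonempty B),
        (∀ a b : B, ∃! x : B, op a x = b) ∧
        (∀ a b : B, ∃! y : B, op y a = b) ∧
        ∃ f : A → B, Function.Injective f ∧ ∀ x y : A, f (x * y) = op (f x) (f y)) ↔
      ((∀ a b c : A, a * b = a * c → b = c) ∧
        (∀ a b c : A, b * a = c * a → b = c)) := by
  constructor
  · rintro ⟨B, op, -, hrow, hcol, f, hf, hmul⟩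
    refine ⟨fun a b c h => hf ?_, fun a b c h => hf ?_⟩
    · exact (hrow (f a) (f (a * b))).unique (hmul a b).symm (by rw [← hmul, h])
    · exact (hcol (f a) (f (b * a))).unique (hmul b a).symm (by rw [← hmul, h])
  · rintro ⟨hl, hr⟩
    have : IsCancelMul A :=
      { mul_left_cancel := fun a _ _ => hl a _ _, mul_right_cancel := fun a _ _ => hr a _ _ }
    obtain ⟨op, hrow, hcol, hop⟩ :=
      (Word.isPartialLatin_limit (A := A)).exists_quasigroup Word.exists_mem_limit_eqOn
    refine ⟨Word A, op, ⟨.of (Classical.arbitrary A)⟩, hrow, hcol, .of, fun _ _ => Word.of.inj,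
      fun x y => (hop _ _ _ ?_).symm⟩
    exact mem_iUnion.2 ⟨0, ⟨(x, y), rfl⟩⟩
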